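/- arXiv:2407.04942 — 3 statements merged into one kernel-verified Lean document; each statement's English description precedes it below -/
import Mathlib

section
/- Let X be a random variable taking finitely many values. Then for τ ∈ (0,1), the τ-expectile e_τ(X) satisfies min X ≤ e_τ(X) ≤ max X, and as τ → 1⁻, e_τ(X) → max X. -/
/-!
The first-order condition `τ U(v) = (1 - τ) L(v)` balances the upper partial moment
`U(v) = E[(X - v)₊]` against the lower one `L(v) = E[(v - X)₊]`. Below `min X` only `U` is
nonzero and above `max X` only `L` is, so a root lies in `[min X, max X]`. If `j` is a point
where `X` attains its maximum `M`, then `τ p_j (M - v) ≤ τ U(v) = (1 - τ) L(v) ≤ (1 - τ)(M - min X)`,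
which squeezes `e_τ(X)` to `M` as `τ → 1⁻`.
-/

open Filter Topology

section PartialMoments

variable {ι : Type*} [Fintype ι] (p x : ι → ℝ)

def upperPartialMoment (v : ℝ) : ℝ := ∑ i, p i * max (x i - v) 0

def lowerPartialMoment (v : ℝ) : ℝ := ∑ i, p i * max (v - x i) 0

def IsExpectile (τ v : ℝ) : Prop :=
  τ * upperPartialMoment p x v = (1 - τ) * lowerPartialMoment p x v

variable {p x}

lemma sum_mul_max_zero_eq_zero_iff (hp : ∀ i, 0 < p i) (y : ι → ℝ) :
    ∑ i, p i * max (y i) 0 = 0 ↔ ∀ i, y i ≤ 0 := by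
  rw [Finset.sum_eq_zero_iff_of_nonneg fun i _ => mul_nonneg (hp i).le (le_max_right _ _)]
  simp only [Finset.mem_univ, true_implies, mul_eq_zero, (hp _).ne', false_or,
    max_eq_right_iff]

lemma upperPartialMoment_eq_zero_iff (hp : ∀ i, 0 < p i) (v : ℝ) :
    upperPartialMoment p x v = 0 ↔ ∀ i, x i ≤ v := by
  simp only [upperPartialMoment, sum_mul_max_zero_eq_zero_iff hp, sub_nonpos]

lemma lowerPartialMoment_eq_zero_iff (hp : ∀ i, 0 < p i) (v : ℝ) :
    lowerPartialMoment p x v = 0 ↔ ∀ i, v ≤ x i := by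
  simp only [lowerPartialMoment, sum_mul_max_zero_eq_zero_iff hp, sub_nonpos]

lemma mul_sub_le_upperPartialMoment (hp : ∀ i, 0 ≤ p i) (v : ℝ) (j : ι) :
    p j * (x j - v) ≤ upperPartialMoment p x v :=
  calc p j * (x j - v) ≤ p j * max (x j - v) 0 := by gcongr; exacts [hp j, le_max_left _ _]
    _ ≤ upperPartialMoment p x v :=
      Finset.single_le_sum (f := fun i => p i * max (x i - v) 0)
        (fun i _ => mul_nonneg (hp i) (le_max_right _ _)) (Finset.mem_univ j)

lemma lowerPartialMoment_le_sub (hp : ∀ i, 0 ≤ p i) (hps : ∑ i, p i = 1) {a v : ℝ}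
    (ha : ∀ i, a ≤ x i) (hav : a ≤ v) : lowerPartialMoment p x v ≤ v - a :=
  calc lowerPartialMoment p x v ≤ ∑ i, p i * (v - a) :=
        Finset.sum_le_sum fun i _ =>
          mul_le_mul_of_nonneg_left (max_le (by linarith [ha i]) (by linarith)) (hp i)
    _ = v - a := by rw [← Finset.sum_mul, hps, one_mul]

namespace IsExpectile

variable {τ v : ℝ}

lemma upperPartialMoment_eq_zero_iff_lower (h : IsExpectile p x τ v) (hτ₀ : 0 < τ)
    (hτ₁ : τ < 1) : upperPartialMoment p x v = 0 ↔ lowerPartialMoment p x v = 0 := by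
  have hτ' : 1 - τ ≠ 0 := by linarith
  rw [← mul_eq_zero_iff_left hτ₀.ne', h, mul_eq_zero_iff_left hτ']

lemma inf'_le (h : IsExpectile p x τ v) (hp : ∀ i, 0 < p i) (hτ₀ : 0 < τ) (hτ₁ : τ < 1)
    (hne : (Finset.univ : Finset ι).Nonempty) : Finset.univ.inf' hne x ≤ v := by
  obtain ⟨i, -, hi⟩ := Finset.exists_mem_eq_inf' hne x
  by_contra! hv
  have hlow : ∀ k, v ≤ x k := fun k => hv.le.trans (Finset.inf'_le x (Finset.mem_univ k))
  have hup := (h.upperPartialMoment_eq_zero_iff_lower hτ₀ hτ₁).2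
    ((lowerPartialMoment_eq_zero_iff hp v).2 hlow)
  exact (hv.trans_eq hi).not_ge ((upperPartialMoment_eq_zero_iff hp v).1 hup i)

lemma le_sup' (h : IsExpectile p x τ v) (hp : ∀ i, 0 < p i) (hτ₀ : 0 < τ) (hτ₁ : τ < 1)
    (hne : (Finset.univ : Finset ι).Nonempty) : v ≤ Finset.univ.sup' hne x := by
  obtain ⟨i, -, hi⟩ := Finset.exists_mem_eq_sup' hne x
  by_contra! hv
  have hup : ∀ k, x k ≤ v := fun k => (Finset.le_sup' x (Finset.mem_univ k)).trans hv.le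
  have hlow := (h.upperPartialMoment_eq_zero_iff_lower hτ₀ hτ₁).1
    ((upperPartialMoment_eq_zero_iff hp v).2 hup)
  exact (hi.symm.trans_lt hv).not_ge ((lowerPartialMoment_eq_zero_iff hp v).1 hlow i)

lemma mul_sub_le (h : IsExpectile p x τ v) (hp : ∀ i, 0 ≤ p i) (hps : ∑ i, p i = 1)
    (hτ₀ : 0 ≤ τ) (hτ₁ : τ ≤ 1) {a : ℝ} (ha : ∀ i, a ≤ x i) (hav : a ≤ v) (j : ι) :
    τ * (p j * (x j - v)) ≤ (1 - τ) * (v - a) :=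
  calc τ * (p j * (x j - v)) ≤ τ * upperPartialMoment p x v := by
        gcongr; exact mul_sub_le_upperPartialMoment hp v j
    _ = (1 - τ) * lowerPartialMoment p x v := h
    _ ≤ (1 - τ) * (v - a) := by
        gcongr
        exact lowerPartialMoment_le_sub hp hps ha hav

end IsExpectile

end PartialMoments

lemma tendsto_nhdsWithin_Iio_one_of_mul_sub_le {e : ℝ → ℝ} {M c d : ℝ} (hc : 0 < c)
    (h : ∀ τ, 0 < τ → τ < 1 → τ * (c * (M - e τ)) ≤ (1 - τ) * d ∧ e τ ≤ M) :
    Tendsto e (𝓝[<] 1) (𝓝 M) := by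
  have hlower : Tendsto (fun τ : ℝ => M - (1 - τ) * d / (τ * c)) (𝓝[<] 1) (𝓝 M) := by
    have : ContinuousAt (fun τ : ℝ => M - (1 - τ) * d / (τ * c)) 1 := by
      fun_prop (disch := positivity)
    simpa using this.tendsto.mono_left nhdsWithin_le_nhds
  have hτ : ∀ᶠ τ in 𝓝[<] (1 : ℝ), 0 < τ ∧ τ < 1 :=
    (eventually_nhdsWithin_of_eventually_nhds (eventually_gt_nhds one_pos)).and
      self_mem_nhdsWithin
  refine tendsto_of_tendsto_of_tendsto_of_le_of_le' hlower tendsto_const_nhds ?_ ?_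
  · filter_upwards [hτ] with τ ⟨hτ₀, hτ₁⟩
    have hle : M - e τ ≤ (1 - τ) * d / (τ * c) := by
      rw [le_div_iff₀ (by positivity)]
      linarith [(h τ hτ₀ hτ₁).1]
    linarith
  · filter_upwards [hτ] with τ ⟨hτ₀, hτ₁⟩
    exact (h τ hτ₀ hτ₁).2

/-- An expectile lies between the minimum and maximum values, and tends to the
maximum as τ → 1⁻. -/
theorem expectile_bounds_and_limit (n : ℕ)
    (hne : (Finset.univ : Finset (Fin n)).Nonempty)
    (x p : Fin n → ℝ) (hp : ∀ i, 0 < p i) (hps : ∑ i, p i = 1)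
    (e : ℝ → ℝ)
    -- first-order condition defining the τ-expectile:
    (hfoc : ∀ τ, 0 < τ → τ < 1 →
      τ * (∑ i, p i * max (x i - e τ) 0) = (1 - τ) * (∑ i, p i * max (e τ - x i) 0)) :
    (∀ τ, 0 < τ → τ < 1 →
      Finset.univ.inf' hne x ≤ e τ ∧ e τ ≤ Finset.univ.sup' hne x) ∧
    Tendsto e (nhdsWithin 1 (Set.Iio 1)) (nhds (Finset.univ.sup' hne x)) := by
  set m := Finset.univ.inf' hne x
  set M := Finset.univ.sup' hne x
  have hexp : ∀ τ, 0 < τ → τ < 1 → IsExpectile p x τ (e τ) := hfoc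
  have hbounds : ∀ τ, 0 < τ → τ < 1 → m ≤ e τ ∧ e τ ≤ M := fun τ hτ₀ hτ₁ =>
    ⟨(hexp τ hτ₀ hτ₁).inf'_le hp hτ₀ hτ₁ hne, (hexp τ hτ₀ hτ₁).le_sup' hp hτ₀ hτ₁ hne⟩
  refine ⟨hbounds, ?_⟩
  obtain ⟨j, -, hj⟩ : ∃ j ∈ Finset.univ, M = x j := Finset.exists_mem_eq_sup' hne x
  refine tendsto_nhdsWithin_Iio_one_of_mul_sub_le (hp j) (d := M - m)
    fun τ hτ₀ hτ₁ => ⟨?_, (hbounds τ hτ₀ hτ₁).2⟩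
  obtain ⟨hm, hM⟩ := hbounds τ hτ₀ hτ₁
  rw [hj] at hM ⊢
  calc τ * (p j * (x j - e τ)) ≤ (1 - τ) * (e τ - m) :=
        (hexp τ hτ₀ hτ₁).mul_sub_le (fun i => (hp i).le) hps hτ₀.le hτ₁.le
          (fun i => Finset.inf'_le x (Finset.mem_univ i)) hm j
    _ ≤ (1 - τ) * (x j - m) := by gcongr
end

section
/- Let γ_u ∈ (0,1) and consider the reachability estimation recursion u(s_t) = max(1_{s_t ∈ S_f^c}, γ_u · u(s_{t+1})) along an infinite state trajectory, where S_f^c denotes the unsafe (infeasible) set. If the trajectory never enters the unsafe set, then the unique bounded solution satisfies u(s_t) = 0 for all t; if the trajectory enters the unsafe set first at time t+k (k ≥ 0), then u(s_t) = γ_u^k. -/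
/-! On a safe stretch of length `n` the recursion collapses to `u t = γ ^ n * u (t + n)`. With
`0 ≤ u ≤ 1` this gives `u t ≤ γ ^ n → 0` on a never-unsafe trajectory, and `u t = γ ^ k` when
`c (t + k) = 1` forces `u (t + k) = 1`. -/

namespace ReachabilityEstimate

variable {γ : ℝ} {c u : ℕ → ℝ}

theorem eq_one_of_unsafe (hrec : ∀ t, u t = max (c t) (γ * u (t + 1))) {t : ℕ}
    (hct : c t = 1) (hut : u t ≤ 1) : u t = 1 :=
  le_antisymm hut (hct ▸ hrec t ▸ le_max_left _ _)

theorem eq_mul_succ_of_safe (hrec : ∀ t, u t = max (c t) (γ * u (t + 1))) (hγ : 0 ≤ γ)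
    {t : ℕ} (hct : c t = 0) (hu : 0 ≤ u (t + 1)) : u t = γ * u (t + 1) := by
  rw [hrec t, hct, max_eq_right (mul_nonneg hγ hu)]

theorem eq_pow_mul_of_safe (hrec : ∀ t, u t = max (c t) (γ * u (t + 1))) (hγ : 0 ≤ γ)
    (hu : ∀ t, 0 ≤ u t) {t n : ℕ} (hsafe : ∀ j < n, c (t + j) = 0) :
    u t = γ ^ n * u (t + n) := by
  induction n with
  | zero => simp
  | succ n ih =>
    rw [ih fun j hj => hsafe j (by omega),
      eq_mul_succ_of_safe hrec hγ (hsafe n n.lt_succ_self) (hu _),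
      pow_succ, mul_assoc, ← add_assoc]

end ReachabilityEstimate

theorem eq_zero_of_forall_le_pow {x γ : ℝ} (hγ0 : 0 ≤ γ) (hγ1 : γ < 1) (hx : 0 ≤ x)
    (hle : ∀ n : ℕ, x ≤ γ ^ n) : x = 0 :=
  le_antisymm (ge_of_tendsto (tendsto_pow_atTop_nhds_zero_of_lt_one hγ0 hγ1)
    (Filter.Eventually.of_forall hle)) hx

open ReachabilityEstimate in
theorem reachability_estimation_values_general (γ : ℝ) (hγ0 : 0 < γ) (hγ1 : γ < 1)
    (c u : ℕ → ℝ)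
    (hrec : ∀ t, u t = max (c t) (γ * u (t + 1)))
    (hbdd : ∀ t, 0 ≤ u t ∧ u t ≤ 1) :
    ((∀ t, c t = 0) → ∀ t, u t = 0) ∧
    (∀ t k, (∀ j, j < k → c (t + j) = 0) → c (t + k) = 1 → u t = γ ^ k) := by
  have hu : ∀ t, 0 ≤ u t := fun t => (hbdd t).1
  constructor
  · intro hsafe t
    refine eq_zero_of_forall_le_pow hγ0.le hγ1 (hu t) fun n => ?_
    rw [eq_pow_mul_of_safe hrec hγ0.le hu fun j _ => hsafe (t + j)]
    exact mul_le_of_le_one_right (pow_nonneg hγ0.le n) (hbdd _).2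
  · intro t k hsafe hunsafe
    rw [eq_pow_mul_of_safe hrec hγ0.le hu hsafe,
      eq_one_of_unsafe hrec hunsafe (hbdd _).2, mul_one]

/-- Reachability estimation along a trajectory: the bounded solution of
u_t = max(c_t, γ u_{t+1}) vanishes on trajectories that never become unsafe,
and equals γ^k when unsafety first occurs k steps ahead. -/
theorem reachability_estimation_values (γ : ℝ) (hγ0 : 0 < γ) (hγ1 : γ < 1)
    (c u : ℕ → ℝ) (hc : ∀ t, c t = 0 ∨ c t = 1)
    (hrec : ∀ t, u t = max (c t) (γ * u (t + 1)))
    (hbdd : ∀ t, 0 ≤ u t ∧ u t ≤ 1) :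
    ((∀ t, c t = 0) → ∀ t, u t = 0) ∧
    (∀ t k, (∀ j, j < k → c (t + j) = 0) → c (t + k) = 1 → u t = γ ^ k) :=
  reachability_estimation_values_general γ hγ0 hγ1 c u hrec hbdd
end

section
/- For probability distributions over a finite action set and a strictly positive base policy π_b, among all policies π with D_KL(π‖π_b) ≤ ε, the exponential-family policy π_λ(a) ∝ π_b(a)exp(A(a)/λ) with λ chosen so that D_KL(π_λ‖π_b) = ε achieves E_{a∼π}[A(a)] at least as large as any π satisfying the constraint, provided A is not constant. -/
/-!
Tilting `πb` by `exp (f / lam)` and normalising by `Z` gives, for every distribution `p`, the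
identity `∑ p f / lam = KL(p ‖ πb) - KL(p ‖ πl) + log Z`. Since `KL(p ‖ πl) ≥ 0` (Gibbs) with
equality at `p = πl`, every `p` with `KL(p ‖ πb) ≤ KL(πl ‖ πb)` has `∑ p f ≤ ∑ πl f`.
-/

namespace TiltedPolicy

open Real Finset

variable {ι : Type*} [Fintype ι]

/-- Zero weights of `p` contribute `0 * log 0 = 0`; `q` is taken positive wherever this is used. -/
noncomputable def klDiv (p q : ι → ℝ) : ℝ := ∑ i, p i * log (p i / q i)

noncomputable def tilt (q f : ι → ℝ) (i : ι) : ℝ := q i * exp (f i) / ∑ j, q j * exp (f j)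

lemma sub_le_mul_log_div {p q : ℝ} (hp : 0 ≤ p) (hq : 0 < q) : p - q ≤ p * log (p / q) := by
  have h := mul_le_mul_of_nonneg_left (self_sub_one_le_mul_log (div_nonneg hp hq.le)) hq.le
  rwa [mul_sub, mul_one, mul_div_cancel₀ _ hq.ne', ← mul_assoc, mul_div_cancel₀ _ hq.ne'] at h

lemma klDiv_nonneg {p q : ι → ℝ} (hp : ∀ i, 0 ≤ p i) (hq : ∀ i, 0 < q i)
    (hpq : ∑ i, q i ≤ ∑ i, p i) : 0 ≤ klDiv p q := by
  have := sum_le_sum (s := univ) fun i _ ↦ sub_le_mul_log_div (hp i) (hq i)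
  rw [sum_sub_distrib] at this
  exact (sub_nonneg.2 hpq).trans this

lemma klDiv_self {p : ι → ℝ} (hp : ∀ i, 0 < p i) : klDiv p p = 0 :=
  sum_eq_zero fun i _ ↦ by rw [div_self (hp i).ne', log_one, mul_zero]

variable [Nonempty ι] {q : ι → ℝ} (f : ι → ℝ)

lemma sum_mul_exp_pos (hq : ∀ i, 0 < q i) : 0 < ∑ j, q j * exp (f j) :=
  sum_pos (fun j _ ↦ mul_pos (hq j) (exp_pos _)) univ_nonempty

lemma tilt_pos (hq : ∀ i, 0 < q i) (i : ι) : 0 < tilt q f i :=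
  div_pos (mul_pos (hq i) (exp_pos _)) (sum_mul_exp_pos f hq)

lemma sum_tilt (hq : ∀ i, 0 < q i) : ∑ i, tilt q f i = 1 := by
  simp only [tilt]
  rw [← sum_div, div_self (sum_mul_exp_pos f hq).ne']

lemma log_tilt_div (hq : ∀ i, 0 < q i) (i : ι) :
    log (tilt q f i / q i) = f i - log (∑ j, q j * exp (f j)) := by
  rw [tilt, div_right_comm, mul_div_cancel_left₀ _ (hq i).ne',
    log_div (exp_pos _).ne' (sum_mul_exp_pos f hq).ne', log_exp]

lemma klDiv_sub_klDiv_tilt (hq : ∀ i, 0 < q i) {p : ι → ℝ} (hp : ∀ i, 0 ≤ p i)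
    (hps : ∑ i, p i = 1) :
    klDiv p q - klDiv p (tilt q f) = ∑ i, p i * f i - log (∑ j, q j * exp (f j)) := by
  have hterm : ∀ i, p i * log (p i / q i) - p i * log (p i / tilt q f i) =
      p i * f i - p i * log (∑ j, q j * exp (f j)) := fun i ↦ by
    rcases (hp i).eq_or_lt with h | h
    · simp [← h]
    · rw [← mul_sub, ← mul_sub, ← log_tilt_div f hq, log_div h.ne' (hq i).ne',
        log_div h.ne' (tilt_pos f hq i).ne', log_div (tilt_pos f hq i).ne' (hq i).ne']
      ring
  rw [klDiv, klDiv, ← sum_sub_distrib, sum_congr rfl fun i _ ↦ hterm i, sum_sub_distrib,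
    ← sum_mul, hps, one_mul]

theorem sum_mul_le_sum_tilt_mul (hq : ∀ i, 0 < q i) {p : ι → ℝ} (hp : ∀ i, 0 ≤ p i)
    (hps : ∑ i, p i = 1) (hkl : klDiv p q ≤ klDiv (tilt q f) q) :
    ∑ i, p i * f i ≤ ∑ i, tilt q f i * f i := by
  have hp_tilt := klDiv_sub_klDiv_tilt f hq hp hps
  have htilt := klDiv_sub_klDiv_tilt f hq (fun i ↦ (tilt_pos f hq i).le) (sum_tilt f hq)
  have hgibbs : 0 ≤ klDiv p (tilt q f) :=
    klDiv_nonneg hp (tilt_pos f hq) (by rw [sum_tilt f hq, hps])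
  rw [klDiv_self (tilt_pos f hq)] at htilt
  linarith

end TiltedPolicy

theorem tilted_policy_optimal_general {A : Type*} [Fintype A] [Nonempty A]
    (Adv : A → ℝ)
    (πb : A → ℝ) (hπb : ∀ a, 0 < πb a)
    (ε : ℝ)
    (lam : ℝ) (hlam : 0 < lam)
    (Z : ℝ) (hZ : Z = ∑ a, πb a * Real.exp (Adv a / lam))
    (πl : A → ℝ) (hπl : ∀ a, πl a = πb a * Real.exp (Adv a / lam) / Z)
    (hKLl : ∑ a, πl a * Real.log (πl a / πb a) = ε) :
    ∀ π : A → ℝ, (∀ a, 0 ≤ π a) → ∑ a, π a = 1 →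
      (∑ a, π a * Real.log (π a / πb a)) ≤ ε →
      ∑ a, π a * Adv a ≤ ∑ a, πl a * Adv a := by
  intro π hπ hπs hKL
  have hπl_tilt : πl = TiltedPolicy.tilt πb (fun a ↦ Adv a / lam) :=
    funext fun a ↦ by rw [hπl, hZ, TiltedPolicy.tilt]
  subst hπl_tilt hKLl
  have h := TiltedPolicy.sum_mul_le_sum_tilt_mul (fun a ↦ Adv a / lam) hπb hπ hπs hKL
  simp only [mul_div_assoc', ← Finset.sum_div] at h
  exact (div_le_div_iff_of_pos_right hlam).1 h

/-- Optimality of the exponentially tilted policy for the KL-constrained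
advantage maximization problem. -/
theorem tilted_policy_optimal {A : Type*} [Fintype A] [Nonempty A]
    (Adv : A → ℝ) (hAdv : ∃ a a', Adv a ≠ Adv a')
    (πb : A → ℝ) (hπb : ∀ a, 0 < πb a) (hπbs : ∑ a, πb a = 1)
    (ε : ℝ) (hε : 0 < ε)
    (lam : ℝ) (hlam : 0 < lam)
    (Z : ℝ) (hZ : Z = ∑ a, πb a * Real.exp (Adv a / lam))
    (πl : A → ℝ) (hπl : ∀ a, πl a = πb a * Real.exp (Adv a / lam) / Z)
    (hKLl : ∑ a, πl a * Real.log (πl a / πb a) = ε) :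
    ∀ π : A → ℝ, (∀ a, 0 ≤ π a) → ∑ a, π a = 1 →
      (∑ a, π a * Real.log (π a / πb a)) ≤ ε →
      ∑ a, π a * Adv a ≤ ∑ a, πl a * Adv a :=
  tilted_policy_optimal_general Adv πb hπb ε lam hlam Z hZ πl hπl hKLl
end
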